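/- Let \gamma > 0 and d \geq 2. With \lambda_n(\gamma,d) and \mu_n(\gamma,d) as defined for the family BD(\gamma,d), the ratio satisfies \lambda_n(\gamma,d)/\mu_n(\gamma,d) = 1 + (d-1)/n + O(1/n^2) as n \to \infty. -/

import Mathlib

/-!
Write `N_n = n (λ_n - μ_n) - (d - 1) μ_n`, so that the quantity to bound is `N_n / (n μ_n)`.
Since `C(n-1, k) = Θ(n^k)`, the top term of `μ_n` gives `n μ_n ≳ n^d`. Both `n (λ_n - μ_n)` and
`(d - 1) μ_n` are of order `n^(d-1)`, but their leading terms `d γ^d n C(n-1, d-2)` and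
`(d - 1) d γ^d C(n-1, d-1)` differ only by `d (d - 1) γ^d C(n-1, d-2)`, because
`(d - 1) C(n-1, d-1) = (n - d + 1) C(n-1, d-2)`. Hence `N_n = O(n^(d-2))`.
-/

open Finset

/-- Birth rates of the family `BD(γ,d)`. -/
noncomputable def bdLambda (γ : ℝ) (d n : ℕ) : ℝ :=
  (∑ i ∈ Finset.Icc 1 d, (i : ℝ) * γ ^ i * (d.choose i) * ((n - 1).choose (i - 1)))
    + γ * ∑ i ∈ Finset.Icc 1 (d - 1),
        ((d : ℝ) - i) * γ ^ i * (d.choose i) * ((n - 1).choose (i - 1))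

/-- Death rates of the family `BD(γ,d)`. -/
noncomputable def bdMu (γ : ℝ) (d n : ℕ) : ℝ :=
  ∑ i ∈ Finset.Icc 1 d, (i : ℝ) * γ ^ i * (d.choose i) * ((n - 1).choose (i - 1))

open Asymptotics Filter

lemma isBigO_natCast_pow_pow {k m : ℕ} (h : k ≤ m) :
    (fun n : ℕ => (n : ℝ) ^ k) =O[atTop] fun n => (n : ℝ) ^ m :=
  (isBigO_pow_pow_cobounded_of_le h).comp_tendsto tendsto_natCast_atTop_cobounded

lemma isEquivalent_natCast_pred :
    (fun n : ℕ => ((n - 1 : ℕ) : ℝ)) ~[atTop] fun n => (n : ℝ) := by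
  have hsub : (fun n : ℕ => (n : ℝ) - 1) ~[atTop] fun n => (n : ℝ) :=
    IsEquivalent.refl.sub_isLittleO <|
      (isLittleO_const_id_atTop (1 : ℝ)).comp_tendsto tendsto_natCast_atTop_atTop
  refine hsub.congr_left ?_
  filter_upwards [eventually_ge_atTop 1] with n hn
  rw [Nat.cast_sub hn, Nat.cast_one]

lemma isTheta_choose_pred (k : ℕ) :
    (fun n : ℕ => ((n - 1).choose k : ℝ)) =Θ[atTop] fun n => (n : ℝ) ^ k := by
  have hshift := tendsto_sub_atTop_nat 1
  have h : (fun n : ℕ => ((n - 1).choose k : ℝ)) =Θ[atTop] fun n => ((n - 1 : ℕ) : ℝ) ^ k :=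
    ⟨(isTheta_choose k).1.comp_tendsto hshift, (isTheta_choose k).2.comp_tendsto hshift⟩
  exact h.trans (isEquivalent_natCast_pred.isTheta.pow k)

lemma isBigO_choose_pred {k m : ℕ} (h : k ≤ m) :
    (fun n : ℕ => ((n - 1).choose k : ℝ)) =O[atTop] fun n => (n : ℝ) ^ m :=
  (isTheta_choose_pred k).isBigO.trans (isBigO_natCast_pow_pow h)

lemma isBigO_natCast_mul_choose_pred {k m : ℕ} (h : k < m) :
    (fun n : ℕ => (n : ℝ) * (n - 1).choose k) =O[atTop] fun n => (n : ℝ) ^ m := by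
  refine ((isBigO_refl (fun n : ℕ => (n : ℝ)) atTop).mul (isBigO_choose_pred le_rfl)).trans ?_
  simpa only [← pow_succ'] using isBigO_natCast_pow_pow h

lemma isBigO_sum_mul_choose_pred (a : ℕ → ℝ) (m : ℕ) :
    (fun n : ℕ => ∑ i ∈ Icc 1 m, a i * (n - 1).choose (i - 1)) =O[atTop]
      fun n => (n : ℝ) ^ (m - 1) :=
  IsBigO.fun_sum fun i hi =>
    (isBigO_choose_pred (by have := (mem_Icc.mp hi).2; omega)).const_mul_left (a i)

lemma isBigO_natCast_mul_sum_mul_choose_pred (a : ℕ → ℝ) (m : ℕ) :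
    (fun n : ℕ => n * ∑ i ∈ Icc 1 m, a i * (n - 1).choose (i - 1)) =O[atTop]
      fun n => (n : ℝ) ^ m := by
  simp only [mul_sum, mul_left_comm _ (a _)]
  exact IsBigO.fun_sum fun i hi =>
    (isBigO_natCast_mul_choose_pred (by have := mem_Icc.mp hi; omega)).const_mul_left (a i)

lemma cast_choose_succ_mul (m k : ℕ) :
    (m.choose (k + 1) : ℝ) * (k + 1) = ((m : ℝ) - k) * m.choose k := by
  rcases le_or_gt k m with h | h
  · rw [← Nat.cast_sub h, mul_comm _ (m.choose k : ℝ)]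
    exact_mod_cast Nat.choose_succ_right_eq m k
  · simp [Nat.choose_eq_zero_of_lt h, Nat.choose_eq_zero_of_lt (h.trans (Nat.lt_succ_self k))]

lemma bdLambda_sub_bdMu (γ : ℝ) (d n : ℕ) :
    bdLambda γ d n - bdMu γ d n = γ * ∑ i ∈ Icc 1 (d - 1),
      ((d : ℝ) - i) * γ ^ i * d.choose i * (n - 1).choose (i - 1) :=
  add_sub_cancel_left _ _

lemma mul_pow_mul_choose_pred_le_bdMu {γ : ℝ} (hγ : 0 ≤ γ) {d : ℕ} (hd : 1 ≤ d) (n : ℕ) :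
    d * γ ^ d * ((n - 1).choose (d - 1) : ℝ) ≤ bdMu γ d n := by
  have hle := single_le_sum
    (f := fun i : ℕ => (i : ℝ) * γ ^ i * d.choose i * (n - 1).choose (i - 1))
    (fun i _ => by positivity) (mem_Icc.mpr ⟨hd, le_rfl⟩)
  unfold bdMu
  simpa only [Nat.choose_self, Nat.cast_one, mul_one] using hle

lemma bdMu_pos {γ : ℝ} (hγ : 0 < γ) {d : ℕ} (hd : 1 ≤ d) (n : ℕ) : 0 < bdMu γ d n := by
  refine sum_pos' (fun i _ => by positivity) ⟨1, mem_Icc.mpr ⟨le_rfl, hd⟩, ?_⟩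
  simp only [Nat.sub_self, Nat.choose_zero_right, Nat.choose_one_right]
  positivity

lemma isBigO_pow_bdMu {γ : ℝ} (hγ : 0 < γ) {d : ℕ} (hd : 1 ≤ d) :
    (fun n : ℕ => (n : ℝ) ^ (d - 1)) =O[atTop] bdMu γ d := by
  refine (isTheta_choose_pred (d - 1)).symm.isBigO.trans (IsBigO.of_bound (d * γ ^ d)⁻¹ ?_)
  refine Eventually.of_forall fun n => ?_
  have hc : (0 : ℝ) < d * γ ^ d := mul_pos (by exact_mod_cast hd) (pow_pos hγ d)
  rw [Real.norm_of_nonneg (by positivity), Real.norm_of_nonneg (bdMu_pos hγ hd n).le,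
    inv_mul_eq_div, le_div_iff₀' hc]
  exact mul_pow_mul_choose_pred_le_bdMu hγ.le hd n

lemma isBigO_inv_natCast_mul_bdMu {γ : ℝ} (hγ : 0 < γ) {d : ℕ} (hd : 1 ≤ d) :
    (fun n : ℕ => ((n : ℝ) * bdMu γ d n)⁻¹) =O[atTop] fun n => ((n : ℝ) ^ d)⁻¹ := by
  have hlow := (isBigO_refl (fun n : ℕ => (n : ℝ)) atTop).mul (isBigO_pow_bdMu hγ hd)
  simp only [← pow_succ', Nat.sub_add_cancel hd] at hlow
  refine hlow.inv_rev (Eventually.of_forall fun n hzero => ?_)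
  simpa [(bdMu_pos hγ hd n).ne', Nat.one_le_iff_ne_zero.mp hd] using hzero

noncomputable def bdNumerator (γ : ℝ) (d n : ℕ) : ℝ :=
  n * (bdLambda γ d n - bdMu γ d n) - ((d : ℝ) - 1) * bdMu γ d n

lemma bdLambda_div_bdMu_sub {γ : ℝ} {d n : ℕ} (hn : n ≠ 0) (hμ : bdMu γ d n ≠ 0) :
    bdLambda γ d n / bdMu γ d n - (1 + ((d : ℝ) - 1) / n) =
      bdNumerator γ d n / (n * bdMu γ d n) := by
  unfold bdNumerator
  field_simp
  ring

lemma bdNumerator_eq (γ : ℝ) (e : ℕ) {n : ℕ} (hn : 1 ≤ n) :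
    bdNumerator γ (e + 2) n =
      γ * (n * ∑ i ∈ Icc 1 e,
          (((e + 2 : ℕ) : ℝ) - i) * γ ^ i * (e + 2).choose i * (n - 1).choose (i - 1))
        - (((e + 2 : ℕ) : ℝ) - 1) *
          ∑ i ∈ Icc 1 (e + 1), (i : ℝ) * γ ^ i * (e + 2).choose i * (n - 1).choose (i - 1)
        + (e + 2) * (e + 1) * γ ^ (e + 2) * (n - 1).choose e := by
  have hchoose := cast_choose_succ_mul (n - 1) e
  rw [Nat.cast_sub hn, Nat.cast_one] at hchoose
  unfold bdNumerator
  rw [bdLambda_sub_bdMu, bdMu, show e + 2 - 1 = e + 1 from rfl, sum_Icc_succ_top (by omega),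
    sum_Icc_succ_top (by omega)]
  simp only [Nat.choose_self, Nat.choose_succ_self_right, Nat.add_sub_cancel]
  push_cast
  linear_combination (-(((e : ℝ) + 2) * γ ^ (e + 2))) * hchoose

lemma isBigO_bdNumerator (γ : ℝ) (e : ℕ) :
    bdNumerator γ (e + 2) =O[atTop] fun n => (n : ℝ) ^ e := by
  have hlam := (isBigO_natCast_mul_sum_mul_choose_pred
    (fun i => (((e + 2 : ℕ) : ℝ) - i) * γ ^ i * (e + 2).choose i) e).const_mul_left γ
  have hmu := (isBigO_sum_mul_choose_pred
    (fun i => (i : ℝ) * γ ^ i * (e + 2).choose i) (e + 1)).const_mul_left (((e + 2 : ℕ) : ℝ) - 1)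
  have htop := (isBigO_choose_pred (le_refl e)).const_mul_left
    (((e : ℝ) + 2) * (e + 1) * γ ^ (e + 2))
  refine ((hlam.sub hmu).add htop).congr' ?_ EventuallyEq.rfl
  filter_upwards [eventually_ge_atTop 1] with n hn
  exact (bdNumerator_eq γ e hn).symm

/-- `λ_n(γ,d)/μ_n(γ,d) = 1 + (d-1)/n + O(1/n²)` as `n → ∞`, for `γ > 0`, `d ≥ 2`. -/
theorem stmt_6 (γ : ℝ) (hγ : 0 < γ) (d : ℕ) (hd : 2 ≤ d) :
    (fun n : ℕ => bdLambda γ d n / bdMu γ d n - (1 + ((d : ℝ) - 1) / n))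
      =O[Filter.atTop] (fun n : ℕ => 1 / (n : ℝ) ^ 2) := by
  obtain ⟨e, rfl⟩ : ∃ e, d = e + 2 := ⟨d - 2, by omega⟩
  have hμ := bdMu_pos hγ (d := e + 2) (by omega)
  have hden := isBigO_inv_natCast_mul_bdMu hγ (d := e + 2) (by omega)
  refine ((isBigO_bdNumerator γ e).mul hden).congr' ?_ ?_
  · filter_upwards [eventually_ne_atTop 0] with n hn
    rw [bdLambda_div_bdMu_sub hn (hμ n).ne', div_eq_mul_inv]
  · filter_upwards [eventually_ne_atTop 0] with n hn
    field_simp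
    ring
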